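/- Let A ∈ L(H)⁺ and S a closed subspace of H. The pair (A,S) is compatible if and only if the operator equation P A P X = P A (I − P) has a bounded solution, where P = P_S is the orthogonal projection onto S. -/

import Mathlib

/-!
Write `P` for the orthogonal projection onto `S`. A bounded idempotent `Q` has range `S` exactly
when `PQ = Q` and `QP = P`, i.e. when `Q = P + PX(1 - P)` for some bounded `X`. If such a `Q`
satisfies `AQ = Q*A`, then `X = Q(1 - P)` solves `PAP X = PA(1 - P)`. Conversely, a solution `X`
gives `(1 - P)AP = X*PAP`, hence `AP = Q*PAP` for `Q = P + PX(1 - P)`, so that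
`AQ = APQ = Q*(PAP)Q` is self-adjoint and therefore equals `(AQ)* = Q*A`.
-/

open ContinuousLinearMap

section Ring

variable {R : Type*} [Ring R]

/-- For idempotent `p`, these are exactly the idempotents `q` with `p * q = q` and `q * p = p`. -/
def obliqueProjection (p x : R) : R := p + p * x * (1 - p)

variable {p : R}

theorem IsIdempotentElem.mul_obliqueProjection (hp : IsIdempotentElem p) (x : R) :
    p * obliqueProjection p x = obliqueProjection p x := by
  simp only [obliqueProjection, mul_add, ← mul_assoc, hp.eq]

theorem IsIdempotentElem.obliqueProjection_mul (hp : IsIdempotentElem p) (x : R) :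
    obliqueProjection p x * p = p := by
  simp only [obliqueProjection, add_mul, mul_assoc, sub_mul, one_mul, hp.eq, sub_self, mul_zero,
    add_zero]

theorem IsIdempotentElem.of_mul_eq_of_mul_eq {q : R} (hpq : p * q = q) (hqp : q * p = p) :
    IsIdempotentElem q := by
  rw [IsIdempotentElem]
  nth_rw 2 [← hpq]
  rw [← mul_assoc, hqp, hpq]

theorem IsIdempotentElem.isIdempotentElem_obliqueProjection (hp : IsIdempotentElem p) (x : R) :
    IsIdempotentElem (obliqueProjection p x) :=
  .of_mul_eq_of_mul_eq (hp.mul_obliqueProjection x) (hp.obliqueProjection_mul x)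

end Ring

section StarRing

variable {R : Type*} [Ring R] [StarRing R] {p a : R}

theorem corner_mul_eq_of_mul_eq_star_mul (hp : IsSelfAdjoint p) {q : R} (hpq : p * q = q)
    (hqp : q * p = p) (haq : a * q = star q * a) :
    p * a * p * (q * (1 - p)) = p * a * (1 - p) := by
  have hpq' : p * star q = p := by simpa [hp.star_eq] using congrArg star hqp
  simp only [mul_assoc]
  rw [← mul_assoc p q, hpq, ← mul_assoc a q, haq, ← mul_assoc, ← mul_assoc, hpq', mul_assoc]

theorem mul_eq_star_obliqueProjection_mul_corner (hp : IsStarProjection p) (ha : IsSelfAdjoint a)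
    {x : R} (hx : p * a * p * x = p * a * (1 - p)) :
    a * p = star (obliqueProjection p x) * (p * a * p) := by
  have hx' : star x * (p * a * p) = (1 - p) * a * p := by
    simpa [star_mul, hp.isSelfAdjoint.star_eq, ha.star_eq, mul_assoc] using congrArg star hx
  have hpb : p * (p * a * p) = p * a * p := by
    rw [← mul_assoc, ← mul_assoc, hp.isIdempotentElem.eq]
  calc a * p = p * a * p + (1 - p) * a * p := by noncomm_ring
    _ = p * a * p + (1 - p) * (star x * (p * a * p)) := by
      rw [hx', ← mul_assoc, ← mul_assoc, hp.one_sub.isIdempotentElem.eq]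
    _ = (p + (1 - p) * star x * p) * (p * a * p) := by
      rw [add_mul, hpb, mul_assoc _ p, hpb, mul_assoc (1 - p)]
    _ = star (obliqueProjection p x) * (p * a * p) := by
      simp [obliqueProjection, star_mul, hp.isSelfAdjoint.star_eq, mul_assoc]

theorem mul_obliqueProjection_eq_star_mul (hp : IsStarProjection p) (ha : IsSelfAdjoint a)
    {x : R} (hx : p * a * p * x = p * a * (1 - p)) :
    a * obliqueProjection p x = star (obliqueProjection p x) * a := by
  set q := obliqueProjection p x
  have hcorner : IsSelfAdjoint (p * a * p) := ha.conjugate_self hp.isSelfAdjoint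
  have haq : a * q = star q * (p * a * p) * q := by
    calc a * q = a * p * q := by rw [mul_assoc, hp.isIdempotentElem.mul_obliqueProjection x]
      _ = star q * (p * a * p) * q := by rw [mul_eq_star_obliqueProjection_mul_corner hp ha hx]
  calc a * q = star (a * q) := by rw [haq, (hcorner.conjugate' q).star_eq]
    _ = star q * a := by rw [star_mul, ha.star_eq]

end StarRing

theorem ContinuousLinearMap.IsIdempotentElem.range_eq_range_iff {R M : Type*} [Semiring R]
    [TopologicalSpace M] [AddCommMonoid M] [Module R M] {p q : M →L[R] M}
    (hp : IsIdempotentElem p) (hq : IsIdempotentElem q) :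
    q.range = p.range ↔ p * q = q ∧ q * p = p := by
  rw [le_antisymm_iff, ← LinearMap.IsIdempotentElem.comp_eq_right_iff hp.toLinearMap,
    ← LinearMap.IsIdempotentElem.comp_eq_right_iff hq.toLinearMap, ← toLinearMap_comp,
    ← toLinearMap_comp, coe_inj, coe_inj]
  rfl

theorem stmt_11
    {H : Type*} [NormedAddCommGroup H] [InnerProductSpace ℂ H] [CompleteSpace H]
    (A : H →L[ℂ] H) (hA : A.IsPositive)
    (S : Submodule ℂ H) [CompleteSpace S]
    -- `Ps` is the orthogonal projection onto `S`, viewed as an operator on `H`.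
    (Ps : H →L[ℂ] H) (hPs : Ps = S.subtypeL ∘L S.orthogonalProjectionOnto) :
    (∃ Q : H →L[ℂ] H, Q ∘L Q = Q ∧ LinearMap.range (Q : H →ₗ[ℂ] H) = S ∧ A ∘L Q = adjoint Q ∘L A) ↔
    (∃ X : H →L[ℂ] H, (Ps ∘L A ∘L Ps) ∘L X = Ps ∘L A ∘L (1 - Ps)) := by
  have hP : IsStarProjection Ps := hPs ▸ isStarProjection_starProjection
  have hPS : LinearMap.range (Ps : H →ₗ[ℂ] H) = S := hPs ▸ S.range_starProjection
  have hPidem := hP.isIdempotentElem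
  constructor
  · rintro ⟨Q, hQ, hQS, hAQ⟩
    obtain ⟨hPQ, hQP⟩ := (hPidem.range_eq_range_iff hQ).1 (hQS.trans hPS.symm)
    exact ⟨Q * (1 - Ps), corner_mul_eq_of_mul_eq_star_mul hP.isSelfAdjoint hPQ hQP
      (by rwa [star_eq_adjoint])⟩
  · rintro ⟨X, hX⟩
    have hQidem := hPidem.isIdempotentElem_obliqueProjection X
    refine ⟨obliqueProjection Ps X, hQidem, ?_, ?_⟩
    · rw [← hPS, hPidem.range_eq_range_iff hQidem]
      exact ⟨hPidem.mul_obliqueProjection X, hPidem.obliqueProjection_mul X⟩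
    · rw [← star_eq_adjoint]
      exact mul_obliqueProjection_eq_star_mul hP hA.isSelfAdjoint hX
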